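/- arXiv:2008.08338 — 3 statements merged into one kernel-verified Lean document; each statement's English description precedes it below -/
import Mathlib

section
/- For the logistic map ℓ_μ with μ ∈ (1,4], no two distinct nodes of the chain-recurrent set are equidistant from the critical point c = 1/2: if N_1 and N_2 are distinct equivalence classes of chain-recurrent points and ρ(N) denotes the infimum of |x - c| over x ∈ N, then ρ(N_1) ≠ ρ(N_2). -/
/-!
Nodes are closed subsets of `[0,1]`, so each contains a point `y` with `|y - 1/2| = ρ(N)`.
If `ρ(N₁) = ρ(N₂)`, the nearest points `y₁ ∈ N₁`, `y₂ ∈ N₂` satisfy `y₂ = y₁` or `y₂ = 1 - y₁`,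
and in either case `ℓ_μ(y₁) = ℓ_μ(y₂)`. Nodes are forward invariant, so this common image lies
in both nodes; distinct nodes are disjoint, hence `N₁ = N₂`.
-/

/-- The logistic map `ℓ_μ(x) = μ x (1 - x)`. -/
def logistic (μ x : ℝ) : ℝ := μ * x * (1 - x)

/-- An `ε`-chain from `p` to `q` for `f` lying in the space `[0,1]`. -/
def EpsChain (f : ℝ → ℝ) (ε p q : ℝ) : Prop :=
  ∃ n : ℕ, 1 ≤ n ∧ ∃ x : ℕ → ℝ, x 0 = p ∧ x n = q ∧
    (∀ i ≤ n, x i ∈ Set.Icc (0 : ℝ) 1) ∧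
    ∀ i < n, |f (x i) - x (i + 1)| ≤ ε

/-- `q` is downstream from `p`. -/
def Downstream (f : ℝ → ℝ) (p q : ℝ) : Prop :=
  ∀ ε > 0, EpsChain f ε p q

/-- A point of `[0,1]` is chain-recurrent if it is downstream from itself. -/
def ChainRecurrent (f : ℝ → ℝ) (p : ℝ) : Prop :=
  p ∈ Set.Icc (0 : ℝ) 1 ∧ Downstream f p p

/-- A node: an equivalence class of chain-recurrent points under mutual
(upstream and downstream) chain reachability. -/
def IsNode (f : ℝ → ℝ) (N : Set ℝ) : Prop :=
  ∃ p, ChainRecurrent f p ∧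
    N = {q | ChainRecurrent f q ∧ Downstream f p q ∧ Downstream f q p}

/-- The minimum distance of a node from the critical point `c = 1/2`. -/
noncomputable def rho (N : Set ℝ) : ℝ := sInf ((fun x => |x - 1 / 2|) '' N)

open Set

section Chains

variable {f : ℝ → ℝ} {ε p q r : ℝ}

lemma EpsChain.left_mem (h : EpsChain f ε p q) : p ∈ Icc (0 : ℝ) 1 := by
  obtain ⟨n, -, x, rfl, -, hx, -⟩ := h
  exact hx 0 n.zero_le

lemma EpsChain.mono {ε' : ℝ} (h : EpsChain f ε p q) (hε : ε ≤ ε') : EpsChain f ε' p q := by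
  obtain ⟨n, hn, x, hx0, hxn, hx, hxs⟩ := h
  exact ⟨n, hn, x, hx0, hxn, hx, fun i hi => (hxs i hi).trans hε⟩

lemma epsChain_of_abs_sub_le (hp : p ∈ Icc (0 : ℝ) 1) (hq : q ∈ Icc (0 : ℝ) 1)
    (h : |f p - q| ≤ ε) : EpsChain f ε p q := by
  refine ⟨1, le_rfl, fun i => if i = 0 then p else q, rfl, rfl, ?_, ?_⟩
  · intro i _
    dsimp only
    split_ifs <;> assumption
  · intro i hi
    obtain rfl : i = 0 := by omega
    simpa using h

lemma EpsChain.trans (h₁ : EpsChain f ε p q) (h₂ : EpsChain f ε q r) : EpsChain f ε p r := by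
  obtain ⟨n, hn, x, rfl, rfl, hx, hxs⟩ := h₁
  obtain ⟨m, hm, y, hy0, rfl, hy, hys⟩ := h₂
  refine ⟨n + m, by omega, fun i => if i ≤ n then x i else y (i - n), by simp, ?_, ?_, ?_⟩
  · simp [show ¬n + m ≤ n by omega]
  · intro i hi
    dsimp only
    split_ifs with h
    exacts [hx i h, hy _ (by omega)]
  · intro i hi
    by_cases h : i < n
    · simpa [h.le, show i + 1 ≤ n from h] using hxs i h
    · have hfirst : (if i ≤ n then x i else y (i - n)) = y (i - n) := by
        split_ifs with h'
        · obtain rfl : i = n := by omega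
          simp [hy0]
        · rfl
      simpa [hfirst, show ¬i + 1 ≤ n by omega, show i + 1 - n = i - n + 1 by omega]
        using hys (i - n) (by omega)

lemma EpsChain.exists_head (h : EpsChain f ε p q) :
    ∃ y ∈ Icc (0 : ℝ) 1, |f p - y| ≤ ε ∧ (y = q ∨ EpsChain f ε y q) := by
  obtain ⟨n, hn, x, rfl, rfl, hx, hxs⟩ := h
  refine ⟨x 1, hx 1 hn, hxs 0 hn, ?_⟩
  rcases hn.eq_or_lt with rfl | hn
  · exact Or.inl rfl
  · exact Or.inr ⟨n - 1, by omega, fun i => x (i + 1), rfl, congrArg x (Nat.sub_add_cancel hn.le),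
      fun i hi => hx _ (by omega), fun i hi => hxs _ (by omega)⟩

lemma EpsChain.exists_last (h : EpsChain f ε p q) :
    ∃ y ∈ Icc (0 : ℝ) 1, (y = p ∨ EpsChain f ε p y) ∧ |f y - q| ≤ ε := by
  obtain ⟨n, hn, x, rfl, rfl, hx, hxs⟩ := h
  obtain ⟨m, rfl⟩ : ∃ m, n = m + 1 := ⟨n - 1, by omega⟩
  refine ⟨x m, hx m (by omega), ?_, hxs m (by omega)⟩
  rcases Nat.eq_zero_or_pos m with rfl | hm
  · exact Or.inl rfl
  · exact Or.inr ⟨m, hm, x, rfl, rfl, fun i hi => hx i (by omega), fun i hi => hxs i (by omega)⟩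

lemma EpsChain.replace_head {p' : ℝ} (h : EpsChain f ε p q) (hp' : p' ∈ Icc (0 : ℝ) 1) :
    EpsChain f (ε + |f p' - f p|) p' q := by
  obtain ⟨y, hy, hpy, hyq⟩ := h.exists_head
  have hstep : EpsChain f (ε + |f p' - f p|) p' y := epsChain_of_abs_sub_le hp' hy <| by
    linarith [abs_sub_le (f p') (f p) y]
  rcases hyq with rfl | hyq
  · exact hstep
  · exact hstep.trans (hyq.mono (le_add_of_nonneg_right (abs_nonneg _)))

lemma EpsChain.replace_last {q' : ℝ} (h : EpsChain f ε p q) (hq' : q' ∈ Icc (0 : ℝ) 1) :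
    EpsChain f (ε + |q - q'|) p q' := by
  obtain ⟨y, hy, hpy, hyq⟩ := h.exists_last
  have hstep : EpsChain f (ε + |q - q'|) y q' := epsChain_of_abs_sub_le hy hq' <| by
    linarith [abs_sub_le (f y) q q']
  rcases hpy with rfl | hpy
  · exact hstep
  · exact (hpy.mono (le_add_of_nonneg_right (abs_nonneg _))).trans hstep

end Chains

section Downstream

variable {f : ℝ → ℝ} {p q r : ℝ}

lemma Downstream.trans (h₁ : Downstream f p q) (h₂ : Downstream f q r) : Downstream f p r :=
  fun ε hε => (h₁ ε hε).trans (h₂ ε hε)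

lemma downstream_apply (hf : MapsTo f (Icc 0 1) (Icc 0 1)) (hp : p ∈ Icc (0 : ℝ) 1) :
    Downstream f p (f p) :=
  fun _ hε => epsChain_of_abs_sub_le hp (hf hp) (by simpa using hε.le)

lemma downstream_of_mem_closure (hq : q ∈ closure {q | Downstream f p q})
    (hqI : q ∈ Icc (0 : ℝ) 1) : Downstream f p q := by
  intro ε hε
  obtain ⟨q', hq', hqq'⟩ := Metric.mem_closure_iff.1 hq (ε / 2) (half_pos hε)
  refine ((hq' (ε / 2) (half_pos hε)).replace_last hqI).mono ?_
  rw [Real.dist_eq] at hqq'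
  linarith [abs_sub_comm q q']

lemma downstream_of_mem_closure_left (hfc : ContinuousOn f (Icc 0 1))
    (hq : q ∈ closure {q | Downstream f q r}) (hqI : q ∈ Icc (0 : ℝ) 1) : Downstream f q r := by
  intro ε hε
  obtain ⟨δ, hδ, hcont⟩ := Metric.continuousWithinAt_iff.1 (hfc q hqI) (ε / 2) (half_pos hε)
  obtain ⟨q', hq', hqq'⟩ := Metric.mem_closure_iff.1 hq δ hδ
  have hchain := hq' (ε / 2) (half_pos hε)
  have himage := hcont hchain.left_mem (by rwa [dist_comm])
  refine (hchain.replace_head hqI).mono ?_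
  rw [Real.dist_eq] at himage
  linarith [abs_sub_comm (f q) (f q')]

-- The first jump of a chain from `q` back to `q` lands near `f q`; continuity at `f q`
-- lets the chain start at `f q` instead.
lemma ChainRecurrent.downstream_of_apply (hf : MapsTo f (Icc 0 1) (Icc 0 1))
    (hfc : ContinuousOn f (Icc 0 1)) (hq : ChainRecurrent f q) : Downstream f (f q) q := by
  intro ε hε
  have hfq := hf hq.1
  obtain ⟨δ, hδ, hcont⟩ := Metric.continuousWithinAt_iff.1 (hfc _ hfq) (ε / 2) (half_pos hε)
  set η := min (δ / 2) (ε / 2)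
  have hη : 0 < η := by positivity
  obtain ⟨y, hy, hqy, hyq⟩ := (hq.2 η hη).exists_head
  have hchain : EpsChain f η y q := by
    rcases hyq with rfl | hyq
    exacts [hq.2 η hη, hyq]
  have himage : dist (f y) (f (f q)) < ε / 2 := hcont hy <| by
    rw [Real.dist_eq, abs_sub_comm]
    linarith [min_le_left (δ / 2) (ε / 2)]
  refine (hchain.replace_head hfq).mono ?_
  rw [Real.dist_eq] at himage
  linarith [abs_sub_comm (f (f q)) (f y), min_le_right (δ / 2) (ε / 2)]

end Downstream

namespace IsNode

variable {f : ℝ → ℝ} {N N' : Set ℝ}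

lemma chainRecurrent_of_mem (hN : IsNode f N) {q : ℝ} (hq : q ∈ N) : ChainRecurrent f q := by
  obtain ⟨p, -, rfl⟩ := hN
  exact hq.1

lemma subset_Icc (hN : IsNode f N) : N ⊆ Icc 0 1 := fun _ hq => (hN.chainRecurrent_of_mem hq).1

lemma nonempty (hN : IsNode f N) : N.Nonempty := by
  obtain ⟨p, hp, rfl⟩ := hN
  exact ⟨p, hp, hp.2, hp.2⟩

lemma mem_of_downstream (hN : IsNode f N) {q r : ℝ} (hq : q ∈ N) (hr : r ∈ Icc (0 : ℝ) 1)
    (hqr : Downstream f q r) (hrq : Downstream f r q) : r ∈ N := by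
  obtain ⟨p, -, rfl⟩ := hN
  exact ⟨⟨hr, hrq.trans hqr⟩, hq.2.1.trans hqr, hrq.trans hq.2.2⟩

lemma eq_of_mem (hN : IsNode f N) (hN' : IsNode f N') {q : ℝ} (hq : q ∈ N) (hq' : q ∈ N') :
    N = N' := by
  obtain ⟨p, -, rfl⟩ := hN
  obtain ⟨p', -, rfl⟩ := hN'
  have hpp' : Downstream f p p' := hq.2.1.trans hq'.2.2
  have hp'p : Downstream f p' p := hq'.2.1.trans hq.2.2
  ext r
  exact ⟨fun ⟨hr, hpr, hrp⟩ => ⟨hr, hp'p.trans hpr, hrp.trans hpp'⟩,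
    fun ⟨hr, hp'r, hrp'⟩ => ⟨hr, hpp'.trans hp'r, hrp'.trans hp'p⟩⟩

lemma mapsTo (hN : IsNode f N) (hf : MapsTo f (Icc 0 1) (Icc 0 1))
    (hfc : ContinuousOn f (Icc 0 1)) : MapsTo f N N := fun _ hq =>
  have hq' := hN.chainRecurrent_of_mem hq
  hN.mem_of_downstream hq (hf hq'.1) (downstream_apply hf hq'.1) (hq'.downstream_of_apply hf hfc)

lemma isClosed (hN : IsNode f N) (hfc : ContinuousOn f (Icc 0 1)) : IsClosed N := by
  refine closure_subset_iff_isClosed.1 fun q hq => ?_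
  have hqI : q ∈ Icc (0 : ℝ) 1 := isClosed_Icc.closure_subset_iff.2 hN.subset_Icc hq
  obtain ⟨p, hp, rfl⟩ := hN
  have hpN : p ∈ {q | ChainRecurrent f q ∧ Downstream f p q ∧ Downstream f q p} := ⟨hp, hp.2, hp.2⟩
  refine IsNode.mem_of_downstream ⟨p, hp, rfl⟩ hpN hqI ?_ ?_
  · exact downstream_of_mem_closure (closure_mono (fun r hr => hr.2.1) hq) hqI
  · exact downstream_of_mem_closure_left hfc (closure_mono (fun r hr => hr.2.2) hq) hqI

lemma isCompact (hN : IsNode f N) (hfc : ContinuousOn f (Icc 0 1)) : IsCompact N :=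
  isCompact_Icc.of_isClosed_subset (hN.isClosed hfc) hN.subset_Icc

end IsNode

lemma IsCompact.exists_abs_sub_half_eq_rho {N : Set ℝ} (hN : IsCompact N) (hne : N.Nonempty) :
    ∃ y ∈ N, |y - 1 / 2| = rho N :=
  (hN.image (by fun_prop)).sInf_mem (hne.image _)

lemma logistic_eq_of_abs_sub_half_eq (μ : ℝ) {x y : ℝ} (h : |x - 1 / 2| = |y - 1 / 2|) :
    logistic μ x = logistic μ y := by
  have key : ∀ z, logistic μ z = μ * (1 / 4 - |z - 1 / 2| ^ 2) := fun z => by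
    rw [sq_abs, logistic]
    ring
  rw [key, key, h]

lemma logistic_mapsTo {μ : ℝ} (h₀ : 0 ≤ μ) (h₄ : μ ≤ 4) :
    MapsTo (logistic μ) (Icc 0 1) (Icc 0 1) := fun x ⟨hx₀, hx₁⟩ =>
  ⟨by unfold logistic; have := sub_nonneg.2 hx₁; positivity,
    by unfold logistic; nlinarith [sq_nonneg (2 * x - 1), mul_nonneg hx₀ (sub_nonneg.2 hx₁)]⟩

lemma continuous_logistic (μ : ℝ) : Continuous (logistic μ) := by
  unfold logistic
  fun_prop

/-- For the logistic map with `μ ∈ (1,4]`, no two distinct nodes are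
equidistant from the critical point `c = 1/2`. -/
theorem nodes_not_equidistant (μ : ℝ) (hμ : μ ∈ Set.Ioc (1 : ℝ) 4)
    (N₁ N₂ : Set ℝ) (h₁ : IsNode (logistic μ) N₁) (h₂ : IsNode (logistic μ) N₂)
    (hne : N₁ ≠ N₂) : rho N₁ ≠ rho N₂ := by
  intro hρ
  have hf := logistic_mapsTo (by linarith [hμ.1]) hμ.2
  have hfc := (continuous_logistic μ).continuousOn (s := Icc 0 1)
  obtain ⟨y₁, hy₁, hρ₁⟩ := (h₁.isCompact hfc).exists_abs_sub_half_eq_rho h₁.nonempty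
  obtain ⟨y₂, hy₂, hρ₂⟩ := (h₂.isCompact hfc).exists_abs_sub_half_eq_rho h₂.nonempty
  have himage : logistic μ y₁ = logistic μ y₂ :=
    logistic_eq_of_abs_sub_half_eq μ (by rw [hρ₁, hρ₂, hρ])
  exact hne (h₁.eq_of_mem h₂ (h₁.mapsTo hf hfc hy₁) (himage ▸ h₂.mapsTo hf hfc hy₂))
end

section
/- For the logistic map with μ ∈ (3, 1+√6), the fixed point p₁ = 1 - 1/μ is a flip (repelling) fixed point: |ℓ_μ'(p₁)| > 1 and ℓ_μ'(p₁) < 0, and the interval J₁ = [1 - p₁, p₁] together with J₂ = [p₁, q₂] (where q₂ is the larger root of ℓ_μ(x) = 1 - p₁) forms a period-2 trapping region: ℓ_μ(J₁) ⊆ J₂ and ℓ_μ(J₂) ⊆ J₁. -/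
open Set

namespace logistic

variable {μ : ℝ}

theorem apply_sub_apply (μ x y : ℝ) : logistic μ x - logistic μ y = μ * (x - y) * (1 - x - y) := by
  unfold logistic; ring

theorem apply_le_div_four (hμ : 0 ≤ μ) (x : ℝ) : logistic μ x ≤ μ / 4 := by
  have : μ / 4 - logistic μ x = μ * (x - 1 / 2) ^ 2 := by unfold logistic; ring
  nlinarith [mul_nonneg hμ (sq_nonneg (x - 1 / 2))]

theorem apply_le_apply_of_mem_Icc (hμ : 0 ≤ μ) {a x : ℝ} (hx : x ∈ Icc (1 - a) a) :
    logistic μ a ≤ logistic μ x := by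
  have := apply_sub_apply μ x a
  have : 0 ≤ μ * (a - x) * (x - (1 - a)) :=
    mul_nonneg (mul_nonneg hμ (by linarith [hx.2])) (by linarith [hx.1])
  linarith

theorem strictAntiOn (hμ : 0 < μ) : StrictAntiOn (logistic μ) (Ici (1 / 2)) := by
  intro x hx y hy hxy
  have := apply_sub_apply μ x y
  have : 0 < μ * (y - x) * (x + y - 1) :=
    mul_pos (mul_pos hμ (by linarith)) (by linarith [mem_Ici.mp hx, mem_Ici.mp hy])
  linarith

theorem isFixedPt_one_sub_one_div (hμ : μ ≠ 0) : Function.IsFixedPt (logistic μ) (1 - 1 / μ) := by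
  unfold Function.IsFixedPt logistic; field_simp; ring

theorem deriv_eq (μ x : ℝ) : deriv (logistic μ) x = μ * (1 - 2 * x) := by
  have h : HasDerivAt (logistic μ) (μ * 1 * (1 - x) + μ * x * (-1)) x :=
    ((hasDerivAt_id x).const_mul μ).mul ((hasDerivAt_id x).const_sub 1)
  rw [h.deriv]; ring

theorem one_div_le_apply_div_four (h2 : 2 ≤ μ) (h6 : (μ - 1) ^ 2 ≤ 6) :
    1 / μ ≤ logistic μ (μ / 4) := by
  have hμ : 0 < μ := by linarith
  have hcubic : μ ^ 3 - 2 * μ ^ 2 - 4 * μ - 8 < 0 := by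
    nlinarith [mul_le_mul_of_nonneg_left h6 hμ.le]
  have hquartic : 16 ≤ μ ^ 3 * (4 - μ) := by
    nlinarith [mul_nonpos_of_nonneg_of_nonpos (sub_nonneg.mpr h2) hcubic.le]
  rw [div_le_iff₀ hμ]
  unfold logistic
  nlinarith

end logistic

/-- For `μ ∈ (3, 1+√6)` the fixed point `p₁ = 1 - 1/μ` of the logistic map is
flip and repelling (`|ℓ_μ'(p₁)| > 1`, `ℓ_μ'(p₁) < 0`), and the intervals
`J₁ = [1-p₁, p₁]`, `J₂ = [p₁, q₂]` (with `q₂` the larger root of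
`ℓ_μ(x) = 1 - p₁`) form a period-2 trapping region:
`ℓ_μ(J₁) ⊆ J₂` and `ℓ_μ(J₂) ⊆ J₁`. -/
theorem flip_fixed_point_trapping (μ : ℝ) (hμ : μ ∈ Set.Ioo 3 (1 + Real.sqrt 6))
    (p₁ : ℝ) (hp₁ : p₁ = 1 - 1 / μ)
    (q₂ : ℝ) (hq₂ : q₂ ∈ Set.Ioc p₁ 1) (hq₂root : logistic μ q₂ = 1 - p₁) :
    (|deriv (logistic μ) p₁| > 1 ∧ deriv (logistic μ) p₁ < 0) ∧
      Set.MapsTo (logistic μ) (Set.Icc (1 - p₁) p₁) (Set.Icc p₁ q₂) ∧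
      Set.MapsTo (logistic μ) (Set.Icc p₁ q₂) (Set.Icc (1 - p₁) p₁) := by
  obtain ⟨h3, hμ6⟩ := hμ
  obtain ⟨hpq, -⟩ := hq₂
  have hμ : 0 < μ := by linarith
  have h6 : (μ - 1) ^ 2 ≤ 6 := ((Real.lt_sqrt (by linarith)).mp (by linarith)).le
  have hp_fix : logistic μ p₁ = p₁ := hp₁ ▸ logistic.isFixedPt_one_sub_one_div hμ.ne'
  have hp_half : 1 / 2 ≤ p₁ := by
    have : 1 / μ < 1 / 3 := one_div_lt_one_div_of_lt (by norm_num) h3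
    linarith
  have hderiv : deriv (logistic μ) p₁ = 2 - μ := by
    rw [logistic.deriv_eq, hp₁]; field_simp; ring
  have hq_max : μ / 4 ≤ q₂ := by
    refine ((logistic.strictAntiOn hμ).le_iff_ge (mem_Ici.mpr (by linarith))
      (mem_Ici.mpr (by linarith))).mp ?_
    rw [hq₂root, hp₁, sub_sub_cancel]
    exact logistic.one_div_le_apply_div_four (by linarith) h6
  refine ⟨⟨?_, by linarith⟩, fun x hx => ⟨?_, ?_⟩, fun x hx => ⟨?_, ?_⟩⟩
  · rw [hderiv, abs_of_neg (by linarith)]; linarith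
  · exact hp_fix ▸ logistic.apply_le_apply_of_mem_Icc hμ.le hx
  · exact (logistic.apply_le_div_four hμ.le x).trans hq_max
  · exact hq₂root ▸ logistic.apply_le_apply_of_mem_Icc hμ.le ⟨by linarith [hx.1, hpq], hx.2⟩
  · exact hp_fix ▸ (logistic.strictAntiOn hμ).antitoneOn (mem_Ici.mpr hp_half)
      (mem_Ici.mpr (hp_half.trans hx.1)) hx.1
end

section
/- For μ = 1 + 2√2, the logistic map ℓ_μ has a point p with ℓ_μ^3(p) = p, p not a fixed point, and (ℓ_μ^3)'(p) = 1; i.e., μ = 1 + 2√2 is a saddle-node (attractor-repellor) bifurcation value for a period-3 orbit. -/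
/-!
At `μ = 1 + 2√2`, i.e. `μ² = 2μ + 7`, the sextic `(ℓ³(x) - x) / (ℓ(x) - x)` whose roots are the
period-3 points is a perfect square: `ℓ³(x) = x + (ℓ(x) - x) · q(μx)²` for an explicit cubic `q`,
so the two period-3 orbits have merged into one. At a root `p` of `q(μ ·)`, found by the
intermediate value theorem, the squared factor makes `ℓ³(x) - x` vanish to second order,
so `ℓ³(p) = p` and `(ℓ³)'(p) = 1`; and `p` lies strictly between the fixed points `0` and
`1 - 1/μ`, where `ℓ(x) > x`.
-/

theorem hasDerivAt_id_add_mul_sq_of_eq_zero {𝕜 : Type*} [NontriviallyNormedField 𝕜]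
    {g h : 𝕜 → 𝕜} {p : 𝕜} (hg : DifferentiableAt 𝕜 g p) (hh : DifferentiableAt 𝕜 h p)
    (hp : h p = 0) : HasDerivAt (fun x => x + g x * h x ^ 2) 1 p :=
  ((hasDerivAt_id' p).add (hg.hasDerivAt.mul (hh.hasDerivAt.pow 2))).congr_deriv (by simp [hp])

noncomputable def saddleNodeCubic (μ y : ℝ) : ℝ :=
  y ^ 3 - (3 * μ + 1) / 2 * y ^ 2 + (2 * μ + 3) * y - (μ + 5) / 2

theorem logistic_iterate_three_eq (μ x : ℝ) (hμ : μ ^ 2 = 2 * μ + 7) :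
    (logistic μ)^[3] x = x + (logistic μ x - x) * saddleNodeCubic μ (μ * x) ^ 2 := by
  simp only [Function.iterate_succ_apply', Function.iterate_zero_apply, logistic,
    saddleNodeCubic]
  grind

theorem self_lt_logistic {μ x : ℝ} (hx₀ : 0 < x) (hx : μ * x < μ - 1) : x < logistic μ x := by
  have hsub : logistic μ x - x = x * (μ - 1 - μ * x) := by unfold logistic; ring
  have hpos : 0 < x * (μ - 1 - μ * x) := mul_pos hx₀ (by linarith)
  linarith

theorem exists_saddleNodeCubic_eq_zero {μ : ℝ} (h₀ : 3.828 < μ) (h₁ : μ < 3.83) :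
    ∃ p ∈ Set.Icc (0.5 : ℝ) 0.52, saddleNodeCubic μ (μ * p) = 0 := by
  have hcont : ContinuousOn (fun p => saddleNodeCubic μ (μ * p)) (Set.Icc 0.5 0.52) := by
    unfold saddleNodeCubic; fun_prop
  have hleft : 0 < saddleNodeCubic μ (μ * 0.5) := by unfold saddleNodeCubic; nlinarith
  have hright : saddleNodeCubic μ (μ * 0.52) < 0 := by unfold saddleNodeCubic; nlinarith
  exact intermediate_value_Icc' (by norm_num) hcont ⟨hright.le, hleft.le⟩

/-- At `μ = 1 + 2√2` the logistic map has a period-3 point `p` (not a fixed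
point) whose multiplier `(ℓ_μ³)'(p)` equals `1`: this is the saddle-node
(attractor-repellor) bifurcation creating the period-3 window. -/
theorem period3_saddle_node :
    ∃ p ∈ Set.Icc (0 : ℝ) 1,
      (logistic (1 + 2 * Real.sqrt 2))^[3] p = p ∧
      logistic (1 + 2 * Real.sqrt 2) p ≠ p ∧
      deriv ((logistic (1 + 2 * Real.sqrt 2))^[3]) p = 1 := by
  set μ := 1 + 2 * Real.sqrt 2
  have hμ : μ ^ 2 = 2 * μ + 7 := by linear_combination 4 * Real.sq_sqrt (zero_le_two (α := ℝ))
  have hs₀ : 1.414 < Real.sqrt 2 := by rw [Real.lt_sqrt (by norm_num)]; norm_num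
  have hs₁ : Real.sqrt 2 < 1.415 := by rw [Real.sqrt_lt' (by norm_num)]; norm_num
  obtain ⟨p, ⟨hp₀, hp₁⟩, hq⟩ :=
    exists_saddleNodeCubic_eq_zero (μ := μ) (by linarith) (by linarith)
  refine ⟨p, ⟨by linarith, by linarith⟩, ?_,
    (self_lt_logistic (by linarith) (by nlinarith)).ne', ?_⟩
  · rw [logistic_iterate_three_eq μ p hμ, hq]; ring
  · rw [funext fun x => logistic_iterate_three_eq μ x hμ]
    refine (hasDerivAt_id_add_mul_sq_of_eq_zero
      (h := fun x => saddleNodeCubic μ (μ * x)) ?_ ?_ hq).deriv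
    · unfold logistic; fun_prop
    · unfold saddleNodeCubic; fun_prop
end
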